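/- Let m ≥ 1. There exists a constant c ≥ 1 depending only on m such that for all u, v ≥ 0, (1/c) · (v^{(m+1)/2} - u^{(m+1)/2})^2 ≤ b[u,v] ≤ c · (v^{(m+1)/2} - u^{(m+1)/2})^2, where b[u,v] := (1/(m+1))(u^{m+1} - v^{m+1}) - v^m (u - v). -/
import Mathlib

private lemma bern {s w : ℝ} (hs : 1 ≤ s) (hw : 0 ≤ w) :
    1 + s * (w - 1) ≤ w ^ s := by
  have h := one_add_mul_self_le_rpow_one_add (by linarith : (-1:ℝ) ≤ w - 1) hs
  have e : 1 + (w - 1) = w := by ring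
  rwa [e] at h

private lemma keyineq {s w : ℝ} (hs : 1 ≤ s) (hw : 0 < w) :
    w ^ s + s * w ^ (s - 1) * (1 - w) ≤ 1 := by
  have hb := bern hs (by positivity : (0:ℝ) ≤ w⁻¹)
  rw [Real.inv_rpow hw.le s] at hb
  have hws : (0:ℝ) < w ^ s := Real.rpow_pos_of_pos hw s
  have h2 : (1 + s * (w⁻¹ - 1)) * w ^ s ≤ (w ^ s)⁻¹ * w ^ s :=
    mul_le_mul_of_nonneg_right hb hws.le
  rw [inv_mul_cancel₀ hws.ne'] at h2
  have hsm : w ^ (s - 1) = w ^ s / w := by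
    rw [Real.rpow_sub hw, Real.rpow_one]
  have hne : w ≠ 0 := hw.ne'
  rw [hsm]
  have expand : w ^ s + s * (w ^ s / w) * (1 - w) = (1 + s * (w⁻¹ - 1)) * w ^ s := by
    field_simp
  rw [expand]; exact h2

private lemma upR {s w : ℝ} (hs : 1 ≤ s) (hw : 0 ≤ w) :
    w ^ s - 1 - s * (w - 1) ≤ s * (w ^ s - 1) ^ 2 := by
  rcases eq_or_lt_of_le hw with rfl | hw0
  · have h0 : (0:ℝ) ^ s = 0 := Real.zero_rpow (by linarith)
    rw [h0]; nlinarith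
  have key := keyineq hs hw0
  set A := w ^ s with hA
  set B := w ^ (s - 1) with hB
  have hs0 : (0:ℝ) ≤ s := by linarith
  rcases le_total w 1 with hw1 | hw1
  · have hAw : A ≤ w := by
      have := Real.rpow_le_rpow_of_exponent_ge hw0 hw1 hs
      simpa [Real.rpow_one] using this
    have hAB : A ≤ B := Real.rpow_le_rpow_of_exponent_ge hw0 hw1 (by linarith)
    have hB1 : B ≤ 1 := Real.rpow_le_one hw0.le hw1 (by linarith)
    nlinarith [mul_nonneg (mul_nonneg hs0 (by linarith : (0:ℝ) ≤ 1 - B)) (by linarith : (0:ℝ) ≤ w - A),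
      mul_nonneg (mul_nonneg hs0 (by linarith : (0:ℝ) ≤ 1 - A)) (by linarith : (0:ℝ) ≤ B - A)]
  · have hwA : w ≤ A := by
      have := Real.rpow_le_rpow_of_exponent_le hw1 hs
      simpa [Real.rpow_one] using this
    have hBA : B ≤ A := Real.rpow_le_rpow_of_exponent_le hw1 (by linarith)
    nlinarith [mul_nonneg (mul_nonneg hs0 (by linarith : (0:ℝ) ≤ w - 1)) (by linarith : (0:ℝ) ≤ A - B),
      mul_nonneg (mul_nonneg hs0 (by linarith : (0:ℝ) ≤ A - w)) (by linarith : (0:ℝ) ≤ A - 1)]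

private lemma core {s w : ℝ} (hs : 1 ≤ s) (hw : 0 ≤ w) :
    (w ^ s - 1) ^ 2 ≤ w ^ (2 * s) - 1 - 2 * s * (w - 1) ∧
      w ^ (2 * s) - 1 - 2 * s * (w - 1) ≤ 4 * s ^ 2 * (w ^ s - 1) ^ 2 := by
  have hsq : w ^ (2 * s) = (w ^ s) ^ 2 := by
    rw [two_mul, Real.rpow_add' hw (by intro h; linarith)]; ring
  have hb := bern hs hw
  have hu := upR hs hw
  constructor
  · rw [hsq]; nlinarith
  · rw [hsq]; nlinarith [sq_nonneg (w ^ s - 1),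
      mul_nonneg (mul_nonneg (by linarith : (0:ℝ) ≤ s - 1) (by linarith : (0:ℝ) ≤ s + 1)) (sq_nonneg (w ^ s - 1))]

theorem stmt_3 (m : ℝ) (hm : 1 ≤ m) :
    ∃ c : ℝ, 1 ≤ c ∧ ∀ u v : ℝ, 0 ≤ u → 0 ≤ v →
      (1 / c) * (v ^ ((m + 1) / 2) - u ^ ((m + 1) / 2)) ^ 2
          ≤ (1 / (m + 1)) * (u ^ (m + 1) - v ^ (m + 1)) - v ^ m * (u - v) ∧
      (1 / (m + 1)) * (u ^ (m + 1) - v ^ (m + 1)) - v ^ m * (u - v)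
          ≤ c * (v ^ ((m + 1) / 2) - u ^ ((m + 1) / 2)) ^ 2 := by
  refine ⟨m + 1, by linarith, fun u v hu hv => ?_⟩
  have hp : (0:ℝ) < m + 1 := by linarith
  set s : ℝ := (m + 1) / 2 with hsdef
  have hs1 : 1 ≤ s := by rw [hsdef]; linarith
  have h2s : 2 * s = m + 1 := by rw [hsdef]; ring
  rcases eq_or_lt_of_le hv with rfl | hv0
  · -- v = 0
    have h1 : (0:ℝ) ^ (m + 1) = 0 := Real.zero_rpow (by linarith)
    have h2 : (0:ℝ) ^ m = 0 := Real.zero_rpow (by linarith)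
    have h3 : (0:ℝ) ^ s = 0 := Real.zero_rpow (by linarith)
    have h4 : u ^ (m + 1) = (u ^ s) ^ 2 := by
      rw [← h2s, two_mul, Real.rpow_add' hu (by intro h; linarith)]; ring
    rw [h1, h2, h3, h4]
    have hQ : (0:ℝ) ≤ (u ^ s) ^ 2 := sq_nonneg _
    constructor
    · have e : (0 - u ^ s) ^ 2 = (u ^ s) ^ 2 - 0 := by ring
      rw [e]; linarith
    · have h5 : 1 / (m + 1) * (u ^ s) ^ 2 ≤ (m + 1) * (u ^ s) ^ 2 := by
        apply mul_le_mul_of_nonneg_right _ hQ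
        rw [div_le_iff₀ hp]; nlinarith
      nlinarith [h5]
  · -- v > 0
    set w : ℝ := u / v with hwdef
    have hw : 0 ≤ w := div_nonneg hu hv0.le
    have huw : u = w * v := by
      rw [hwdef, div_mul_cancel₀ u hv0.ne']
    have hQ : (0:ℝ) < v ^ (m + 1) := Real.rpow_pos_of_pos hv0 _
    have hup : u ^ (m + 1) = w ^ (m + 1) * v ^ (m + 1) := by
      rw [huw]; exact Real.mul_rpow hw hv0.le
    have hus : u ^ s = w ^ s * v ^ s := by
      rw [huw]; exact Real.mul_rpow hw hv0.le
    have hvm : v ^ m * (u - v) = v ^ (m + 1) * (w - 1) := by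
      have e : v ^ (m + 1) = v ^ m * v := by rw [Real.rpow_add_one hv0.ne' m]
      rw [e, huw]; ring
    have hvs : (v ^ s) ^ 2 = v ^ (m + 1) := by
      rw [← h2s, two_mul, Real.rpow_add' hv0.le (by intro h; linarith)]; ring
    have hcore := core hs1 hw
    rw [h2s] at hcore
    obtain ⟨hlow, hhigh⟩ := hcore
    have hexp : (v ^ s - u ^ s) ^ 2 = v ^ (m + 1) * (w ^ s - 1) ^ 2 := by
      rw [hus, ← hvs]; ring
    have hc2 : 1 / (m + 1) * (w ^ (m + 1) * v ^ (m + 1) - v ^ (m + 1)) - v ^ (m + 1) * (w - 1)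
        = v ^ (m + 1) * (w ^ (m + 1) - 1 - (m + 1) * (w - 1)) / (m + 1) := by
      field_simp
    rw [hexp, hup, hvm, hc2]
    constructor
    · have step : v ^ (m + 1) * (w ^ s - 1) ^ 2
          ≤ v ^ (m + 1) * (w ^ (m + 1) - 1 - (m + 1) * (w - 1)) :=
        mul_le_mul_of_nonneg_left hlow hQ.le
      calc 1 / (m + 1) * (v ^ (m + 1) * (w ^ s - 1) ^ 2)
          = v ^ (m + 1) * (w ^ s - 1) ^ 2 / (m + 1) := by ring
        _ ≤ v ^ (m + 1) * (w ^ (m + 1) - 1 - (m + 1) * (w - 1)) / (m + 1) := by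
            exact div_le_div_of_nonneg_right step hp.le
    · rw [div_le_iff₀ hp]
      have h4s : 4 * s ^ 2 = (m + 1) ^ 2 := by rw [hsdef]; ring
      rw [h4s] at hhigh
      nlinarith [mul_le_mul_of_nonneg_left hhigh hQ.le]
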